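/- arXiv:2412.03383 — 2 statements merged into one kernel-verified Lean document; each statement's English description precedes it below -/
import Mathlib

section
/- For all real numbers x, y with 0 ≤ x ≤ 1 and -x ≤ y ≤ x, the function f(x,y) := sqrt(4(1-x)(3·sqrt(x+y) + 2·sqrt(x-y))² + (2x + 5y + 2)²) satisfies f(x,y) ≤ (5/2)·sqrt(11/2) + 8·sqrt(2/11)·y, with equality if and only if x = 9/16 and y = 0. -/
/-!
With `a = √(x+y)` and `b = √(x-y)`, the square of the right-hand side is `(55 + 32y)² / 88`, and
its excess over the radicand of `f` is an explicit polynomial in `a, b`: a positive combination of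
three squares plus `4ab(a-b)²`. Since `a, b ≥ 0`, this is nonnegative, and it vanishes exactly
when `a = b = 3/4`, i.e. at `(x, y) = (9/16, 0)`.
-/

/-- `f(x,y) = sqrt(4(1-x)(3√(x+y)+2√(x-y))² + (2x+5y+2)²)`. -/
noncomputable def f (x y : ℝ) : ℝ :=
  Real.sqrt (4*(1-x)*(3*Real.sqrt (x+y) + 2*Real.sqrt (x-y))^2 + (2*x+5*y+2)^2)

noncomputable def radicand (a b : ℝ) : ℝ :=
  4 * (1 - (a^2 + b^2)/2) * (3*a + 2*b)^2 + (a^2 + b^2 + 5*(a^2 - b^2)/2 + 2)^2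

lemma exists_sq_param {x y : ℝ} (hy1 : -x ≤ y) (hy2 : y ≤ x) :
    ∃ a b : ℝ, 0 ≤ a ∧ 0 ≤ b ∧ x = (a^2 + b^2)/2 ∧ y = (a^2 - b^2)/2 := by
  refine ⟨√(x + y), √(x - y), Real.sqrt_nonneg _, Real.sqrt_nonneg _, ?_, ?_⟩ <;>
    rw [Real.sq_sqrt (by linarith), Real.sq_sqrt (by linarith)] <;> ring

lemma f_sq_param {a b : ℝ} (ha : 0 ≤ a) (hb : 0 ≤ b) :
    f ((a^2 + b^2)/2) ((a^2 - b^2)/2) = √(radicand a b) := by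
  rw [f, show (a^2 + b^2)/2 + (a^2 - b^2)/2 = a^2 by ring,
    show (a^2 + b^2)/2 - (a^2 - b^2)/2 = b^2 by ring, Real.sqrt_sq ha, Real.sqrt_sq hb, radicand]
  ring_nf

lemma radicand_nonneg {a b : ℝ} (h : a^2 + b^2 ≤ 2) : 0 ≤ radicand a b :=
  add_nonneg (mul_nonneg (mul_nonneg (by norm_num) (by linarith)) (sq_nonneg _)) (sq_nonneg _)

lemma bound_sub_radicand (a b : ℝ) :
    (55 + 16*(a^2 - b^2))^2/88 - radicand a b
      = (1/216) * (81 - 40*a^2 - 64*a*b - 40*b^2)^2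
        + (1/1766556) * (1487*a^2 - 2200*a*b + 713*b^2)^2
        + (4300/4461) * (a*b - b^2)^2
        + 4 * (a*b) * (a - b)^2 := by
  rw [radicand]; ring

lemma radicand_le_bound {a b : ℝ} (hab : 0 ≤ a*b) :
    radicand a b ≤ (55 + 16*(a^2 - b^2))^2/88 := by
  have := bound_sub_radicand a b
  linarith [sq_nonneg (81 - 40*a^2 - 64*a*b - 40*b^2),
    sq_nonneg (1487*a^2 - 2200*a*b + 713*b^2), sq_nonneg (a*b - b^2),
    mul_nonneg hab (sq_nonneg (a - b))]

lemma eq_of_radicand_eq_bound {a b : ℝ} (ha : 0 ≤ a) (hb : 0 ≤ b)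
    (h : radicand a b = (55 + 16*(a^2 - b^2))^2/88) : a = 3/4 ∧ b = 3/4 := by
  have hsum := bound_sub_radicand a b
  rw [h, sub_self] at hsum
  have n1 := sq_nonneg (81 - 40*a^2 - 64*a*b - 40*b^2)
  have n2 := sq_nonneg (1487*a^2 - 2200*a*b + 713*b^2)
  have n3 := sq_nonneg (a*b - b^2)
  have n4 := mul_nonneg (mul_nonneg ha hb) (sq_nonneg (a - b))
  have h1 : 81 - 40*a^2 - 64*a*b - 40*b^2 = 0 := pow_eq_zero_iff two_ne_zero |>.mp (by linarith)
  have h2 : 1487*a^2 - 2200*a*b + 713*b^2 = 0 := pow_eq_zero_iff two_ne_zero |>.mp (by linarith)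
  have h3 : a*b - b^2 = 0 := pow_eq_zero_iff two_ne_zero |>.mp (by linarith)
  rcases mul_eq_zero.mp (show b * (a - b) = 0 by linarith) with hb0 | hab
  · subst hb0
    have : a = 0 := pow_eq_zero_iff two_ne_zero |>.mp (by linarith)
    subst this
    norm_num at h1
  · have hba : b = a := by linarith
    subst hba
    have : (b - 3/4) * (b + 3/4) = 0 := by linear_combination (-1/144) * h1
    rcases mul_eq_zero.mp this with h | h
    · constructor <;> linarith
    · linarith

lemma radicand_eq_bound_iff {a b : ℝ} (ha : 0 ≤ a) (hb : 0 ≤ b) :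
    radicand a b = (55 + 16*(a^2 - b^2))^2/88 ↔ a = 3/4 ∧ b = 3/4 := by
  refine ⟨eq_of_radicand_eq_bound ha hb, ?_⟩
  rintro ⟨rfl, rfl⟩
  norm_num [radicand]

lemma sq_param_eq_iff {a b : ℝ} (ha : 0 ≤ a) (hb : 0 ≤ b) :
    ((a^2 + b^2)/2 = 9/16 ∧ (a^2 - b^2)/2 = 0) ↔ (a = 3/4 ∧ b = 3/4) := by
  constructor
  · rintro ⟨hx, hy⟩
    exact ⟨(pow_left_inj₀ ha (by norm_num) two_ne_zero).mp (by linarith),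
      (pow_left_inj₀ hb (by norm_num) two_ne_zero).mp (by linarith)⟩
  · rintro ⟨rfl, rfl⟩
    norm_num

lemma rhs_eq_sqrt {y : ℝ} (hy : 0 ≤ 55 + 32*y) :
    (5/2) * √(11/2) + 8 * √(2/11) * y = √((55 + 32*y)^2/88) := by
  have hs : √(11/2) ^ 2 = 11/2 := Real.sq_sqrt (by norm_num)
  have ht : √(2/11) ^ 2 = 2/11 := Real.sq_sqrt (by norm_num)
  have hst : √(11/2) * √(2/11) = 1 := by
    rw [← Real.sqrt_mul (by norm_num)]; norm_num
  have hlhs : 0 ≤ (5/2) * √(11/2) + 8 * √(2/11) * y := by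
    nlinarith [Real.sqrt_nonneg (11/2), Real.sqrt_nonneg (2/11)]
  rw [eq_comm, Real.sqrt_eq_iff_mul_self_eq (by positivity) hlhs]
  linear_combination (-25/4) * hs - 64 * y^2 * ht - 40 * y * hst

theorem stmt0_general (x y : ℝ) (hx1 : x ≤ 1) (hy1 : -x ≤ y) (hy2 : y ≤ x) :
    f x y ≤ (5/2) * Real.sqrt (11/2) + 8 * Real.sqrt (2/11) * y ∧
    (f x y = (5/2) * Real.sqrt (11/2) + 8 * Real.sqrt (2/11) * y ↔ x = 9/16 ∧ y = 0) := by
  obtain ⟨a, b, ha, hb, rfl, rfl⟩ := exists_sq_param hy1 hy2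
  rw [f_sq_param ha hb, rhs_eq_sqrt (by linarith),
    show 55 + 32 * ((a^2 - b^2)/2) = 55 + 16*(a^2 - b^2) by ring]
  refine ⟨Real.sqrt_le_sqrt (radicand_le_bound (mul_nonneg ha hb)), ?_⟩
  rw [Real.sqrt_inj (radicand_nonneg (by linarith)) (by positivity),
    radicand_eq_bound_iff ha hb, sq_param_eq_iff ha hb]

theorem stmt0 (x y : ℝ) (hx0 : 0 ≤ x) (hx1 : x ≤ 1) (hy1 : -x ≤ y) (hy2 : y ≤ x) :
    f x y ≤ (5/2) * Real.sqrt (11/2) + 8 * Real.sqrt (2/11) * y ∧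
    (f x y = (5/2) * Real.sqrt (11/2) + 8 * Real.sqrt (2/11) * y ↔ x = 9/16 ∧ y = 0) :=
  stmt0_general x y hx1 hy1 hy2
end

section
/- Every symmetric state of two qubits admits a real Schmidt-type canonical form: for any unit vector |Φ⟩ in the symmetric subspace Sym²(ℂ²) of ℂ²⊗ℂ², there exist a 2×2 unitary U and ξ ∈ [0, π/2] such that (U⊗U)|Φ⟩ = cos(ξ/2)|00⟩ + sin(ξ/2)|11⟩. -/
/-!
Write `Φ` as the symmetric matrix `M`; then `(U ⊗ U)Φ` is `U M Uᵀ`, and the claim is the Takagi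
factorisation of a `2 × 2` complex symmetric matrix. If `x` is an eigenvector of the Hermitian
positive semidefinite matrix `M Mᴴ = M M̄` with eigenvalue `s²`, then `s x + M x̄` (or `i x` if
this vanishes) is a conjugate eigenvector: `M z̄ = s z`. Completing its normalisation `u = (α, β)`
to the unitary with rows `ū` and `γ (-β, α)` diagonalises `M`, the phase `γ` making the second
diagonal entry `t ≥ 0`. Unitary congruence preserves the Frobenius norm, so `s² + t² = 1`, and
after possibly swapping the two rows, `s = cos (ξ / 2)` and `t = sin (ξ / 2)` with
`ξ / 2 ∈ [0, π / 4]`.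
-/

open Complex Matrix ComplexOrder

lemma Complex.exists_star_mul_self_eq_one_and_sq_mul_eq_norm (μ : ℂ) :
    ∃ γ : ℂ, star γ * γ = 1 ∧ γ ^ 2 * μ = ‖μ‖ := by
  refine ⟨exp (↑(-(arg μ / 2)) * I), ?_, ?_⟩
  · rw [Complex.star_def, ← normSq_eq_conj_mul_self, normSq_eq_norm_sq, norm_exp_ofReal_mul_I]
    norm_num
  · nth_rw 2 [← norm_mul_exp_arg_mul_I μ]
    rw [← exp_nat_mul, mul_left_comm, ← exp_add]
    push_cast
    ring_nf
    rw [exp_zero, mul_one]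

open Real in
lemma Real.exists_cos_half_eq_and_sin_half_eq {s t : ℝ} (ht : 0 ≤ t) (hts : t ≤ s)
    (h : s ^ 2 + t ^ 2 = 1) :
    ∃ ξ : ℝ, 0 ≤ ξ ∧ ξ ≤ π / 2 ∧ cos (ξ / 2) = s ∧ sin (ξ / 2) = t := by
  have ht1 : t ≤ 1 := by nlinarith
  have ht_le : t ≤ sin (π / 4) := by
    rw [sin_pi_div_four]
    nlinarith [sq_sqrt (zero_le_two : (0 : ℝ) ≤ 2), sqrt_nonneg 2]
  have harcsin : arcsin t ≤ π / 4 :=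
    (arcsin_le_iff_le_sin' ⟨by linarith [pi_pos], by linarith [pi_pos]⟩).2 ht_le
  refine ⟨2 * arcsin t, by linarith [arcsin_nonneg.2 ht], by linarith, ?_, ?_⟩
  · rw [mul_div_cancel_left₀ _ two_ne_zero, cos_arcsin, ← h, add_sub_cancel_right,
      sqrt_sq (ht.trans hts)]
  · rw [mul_div_cancel_left₀ _ two_ne_zero, sin_arcsin (by linarith) ht1]

namespace Matrix

variable {n : Type*} [Fintype n]

lemma mul_mul_transpose_apply {R : Type*} [CommSemiring R] (U M : Matrix n n R) (i j : n) :
    (U * M * Uᵀ) i j = ∑ k, ∑ l, U i k * U j l * M k l := by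
  simp only [mul_apply, transpose_apply, Finset.sum_mul]
  rw [Finset.sum_comm]
  exact Finset.sum_congr rfl fun k _ => Finset.sum_congr rfl fun l _ => by ring

lemma trace_mul_conjTranspose_self (A : Matrix n n ℂ) :
    (A * Aᴴ).trace = ((∑ i, ∑ j, normSq (A i j) : ℝ) : ℂ) := by
  simp [trace, mul_apply, Complex.mul_conj]

lemma trace_unitary_congr_mul_conjTranspose {R : Type*} [CommRing R] [StarRing R] [DecidableEq n]
    {U : Matrix n n R} (hU : U ∈ unitaryGroup n R) (M : Matrix n n R) :
    (U * M * Uᵀ * (U * M * Uᵀ)ᴴ).trace = (M * Mᴴ).trace := by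
  have hUt : Uᵀ * Uᵀᴴ = 1 := (transpose_mem_unitaryGroup_iff.2 hU).2
  calc (U * M * Uᵀ * (U * M * Uᵀ)ᴴ).trace = (U * (M * Mᴴ) * Uᴴ).trace := by
        simp only [conjTranspose_mul, Matrix.mul_assoc, ← Matrix.mul_assoc Uᵀ, hUt, Matrix.one_mul]
    _ = (Uᴴ * U * (M * Mᴴ)).trace := by rw [trace_mul_cycle, Matrix.mul_assoc]
    _ = (M * Mᴴ).trace := by rw [← star_eq_conjTranspose, hU.1, Matrix.one_mul]

lemma exists_ne_zero_mulVec_star_eq_smul_of_sq {M : Matrix n n ℂ} {x : n → ℂ} (hx : x ≠ 0)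
    (s : ℝ) (h : M *ᵥ star (M *ᵥ star x) = ((s ^ 2 : ℝ) : ℂ) • x) :
    ∃ z : n → ℂ, z ≠ 0 ∧ M *ᵥ star z = (s : ℂ) • z := by
  by_cases hz : (s : ℂ) • x + M *ᵥ star x = 0
  · refine ⟨I • x, smul_ne_zero I_ne_zero hx, ?_⟩
    have : M *ᵥ star x = -((s : ℂ) • x) := eq_neg_of_add_eq_zero_right hz
    rw [star_smul, Complex.star_def, conj_I, mulVec_smul, this, smul_neg, neg_smul, neg_neg,
      smul_comm]
  · refine ⟨_, hz, ?_⟩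
    rw [star_add, mulVec_add, star_smul, Complex.star_def, conj_ofReal, mulVec_smul, h, smul_add,
      smul_smul, add_comm]
    push_cast
    ring_nf

lemma IsSymm.exists_ne_zero_mulVec_star_eq_smul [DecidableEq n] [Nonempty n] {M : Matrix n n ℂ}
    (hM : M.IsSymm) : ∃ (z : n → ℂ) (s : ℝ), 0 ≤ s ∧ z ≠ 0 ∧ M *ᵥ star z = (s : ℂ) • z := by
  have hH := posSemidef_self_mul_conjTranspose M
  obtain ⟨i⟩ := ‹Nonempty n›
  have hx : ⇑(hH.1.eigenvectorBasis i) ≠ 0 := by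
    simpa using hH.1.eigenvectorBasis.orthonormal.ne_zero i
  have hMH : ∀ x, Mᴴ *ᵥ x = star (M *ᵥ star x) := fun x => by
    rw [star_mulVec, star_star, ← mulVec_transpose, hM.conjTranspose.eq]
  have heig := hH.1.mulVec_eigenvectorBasis i
  rw [← mulVec_mulVec, hMH, ← Complex.coe_smul, ← Real.sq_sqrt (hH.eigenvalues_nonneg i)] at heig
  obtain ⟨z, hz, hMz⟩ := exists_ne_zero_mulVec_star_eq_smul_of_sq hx _ heig
  exact ⟨z, _, Real.sqrt_nonneg _, hz, hMz⟩

lemma exists_star_dotProduct_self_eq_one_mulVec_star_eq_smul {M : Matrix n n ℂ} {z : n → ℂ}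
    (hz : z ≠ 0) {s : ℝ} (h : M *ᵥ star z = (s : ℂ) • z) :
    ∃ u : n → ℂ, star u ⬝ᵥ u = 1 ∧ M *ᵥ star u = (s : ℂ) • u := by
  have hpos : 0 < star z ⬝ᵥ z := dotProduct_star_self_pos_iff.2 hz
  set r := (star z ⬝ᵥ z).re
  have hr : star z ⬝ᵥ z = r := eq_re_of_ofReal_le (r := 0) (by exact_mod_cast hpos.le)
  have hr0 : 0 < r := (pos_iff.1 hpos).1
  set c : ℝ := (√r)⁻¹
  have hc : c ^ 2 * r = 1 := by
    rw [inv_pow, Real.sq_sqrt hr0.le, inv_mul_cancel₀ hr0.ne']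
  have hstar : star ((c : ℂ) • z) = (c : ℂ) • star z := by
    rw [star_smul, Complex.star_def, conj_ofReal]
  refine ⟨(c : ℂ) • z, ?_, ?_⟩
  · rw [hstar, smul_dotProduct, dotProduct_smul, hr, smul_smul, smul_eq_mul]
    exact_mod_cast (by linear_combination hc : c * c * r = 1)
  · rw [hstar, mulVec_smul, h, smul_comm]

lemma exists_unitary_congr_eq_diagonal_of_mulVec_star {M : Matrix (Fin 2) (Fin 2) ℂ}
    (hM : M.IsSymm) {u : Fin 2 → ℂ} (hu : star u ⬝ᵥ u = 1) {s : ℝ}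
    (h : M *ᵥ star u = (s : ℂ) • u) :
    ∃ U ∈ unitaryGroup (Fin 2) ℂ, ∃ t : ℝ, 0 ≤ t ∧ U * M * Uᵀ = diagonal ![(s : ℂ), t] := by
  obtain ⟨a, b, d, rfl⟩ : ∃ a b d, M = !![a, b; b, d] :=
    ⟨M 0 0, M 0 1, M 1 1, (eta_fin_two M).trans (by rw [hM.apply 0 1])⟩
  obtain ⟨α, β, rfl⟩ : ∃ α β, u = ![α, β] := ⟨u 0, u 1, by rw [← List.ofFn_inj]; rfl⟩
  simp only [dotProduct, Fin.sum_univ_two, Pi.star_apply, cons_val_zero, cons_val_one,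
    Complex.star_def] at hu
  have h0 : a * starRingEnd ℂ α + b * starRingEnd ℂ β = s * α := by
    simpa [mulVec, dotProduct, Fin.sum_univ_two] using congrFun h 0
  have h1 : b * starRingEnd ℂ α + d * starRingEnd ℂ β = s * β := by
    simpa [mulVec, dotProduct, Fin.sum_univ_two] using congrFun h 1
  set μ := a * β ^ 2 - 2 * b * α * β + d * α ^ 2
  obtain ⟨γ, hγ, hμ⟩ := Complex.exists_star_mul_self_eq_one_and_sq_mul_eq_norm μ
  refine ⟨!![star α, star β; -γ * β, γ * α], ?_, ‖μ‖, norm_nonneg _, ?_⟩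
  · rw [Complex.star_def] at hγ
    rw [mem_unitaryGroup_iff]
    ext i j
    fin_cases i <;> fin_cases j <;> simp [Matrix.mul_apply, Fin.sum_univ_two]
    · exact hu
    · ring
    · ring
    · linear_combination (starRingEnd ℂ α * α + starRingEnd ℂ β * β) * hγ + hu
  · ext i j
    fin_cases i <;> fin_cases j <;> simp [Matrix.mul_apply, Fin.sum_univ_two]
    · linear_combination starRingEnd ℂ α * h0 + starRingEnd ℂ β * h1 + s * hu
    · linear_combination -γ * β * h0 + γ * α * h1
    · linear_combination -γ * β * h0 + γ * α * h1
    · linear_combination hμ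

lemma swap_mul_diagonal_mul_transpose (x y : ℂ) :
    !![0, 1; 1, 0] * diagonal ![x, y] * !![(0 : ℂ), 1; 1, 0]ᵀ = diagonal ![y, x] := by
  ext i j
  fin_cases i <;> fin_cases j <;> simp [Matrix.mul_apply, Fin.sum_univ_two, vecMul_diagonal]

lemma IsSymm.exists_unitary_congr_eq_diagonal_antitone {M : Matrix (Fin 2) (Fin 2) ℂ}
    (hM : M.IsSymm) :
    ∃ U ∈ unitaryGroup (Fin 2) ℂ, ∃ s t : ℝ, 0 ≤ t ∧ t ≤ s ∧
      U * M * Uᵀ = diagonal ![(s : ℂ), t] := by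
  obtain ⟨z, s, hs, hz, hMz⟩ := hM.exists_ne_zero_mulVec_star_eq_smul
  obtain ⟨u, hu, hMu⟩ := exists_star_dotProduct_self_eq_one_mulVec_star_eq_smul hz hMz
  obtain ⟨U, hU, t, ht, hD⟩ := exists_unitary_congr_eq_diagonal_of_mulVec_star hM hu hMu
  rcases le_total t s with hts | hst
  · exact ⟨U, hU, s, t, ht, hts, hD⟩
  · have hP : !![(0 : ℂ), 1; 1, 0] ∈ unitaryGroup (Fin 2) ℂ := by
      rw [mem_unitaryGroup_iff]
      ext i j
      fin_cases i <;> fin_cases j <;> simp [Matrix.mul_apply, Fin.sum_univ_two]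
    refine ⟨_, Submonoid.mul_mem _ hP hU, t, s, hs, hst, ?_⟩
    calc _ = !![0, 1; 1, 0] * (U * M * Uᵀ) * !![(0 : ℂ), 1; 1, 0]ᵀ := by
          simp only [transpose_mul, Matrix.mul_assoc]
      _ = _ := by rw [hD, swap_mul_diagonal_mul_transpose]

lemma sq_add_sq_eq_sum_normSq_of_unitary_congr_eq_diagonal {U M : Matrix (Fin 2) (Fin 2) ℂ}
    (hU : U ∈ unitaryGroup (Fin 2) ℂ) {s t : ℝ} (hD : U * M * Uᵀ = diagonal ![(s : ℂ), t]) :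
    s ^ 2 + t ^ 2 = ∑ i, ∑ j, normSq (M i j) := by
  have h := trace_unitary_congr_mul_conjTranspose hU M
  rw [hD, trace_mul_conjTranspose_self, trace_mul_conjTranspose_self, ofReal_inj] at h
  rw [← h]
  simp [Fin.sum_univ_two, sq]

end Matrix

theorem stmt4 (Φ : Fin 2 × Fin 2 → ℂ)
    (hsym : ∀ i j : Fin 2, Φ (i, j) = Φ (j, i))
    (hunit : ∑ v : Fin 2 × Fin 2, Complex.normSq (Φ v) = 1) :
    ∃ U : Matrix (Fin 2) (Fin 2) ℂ, U ∈ Matrix.unitaryGroup (Fin 2) ℂ ∧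
      ∃ ξ : ℝ, 0 ≤ ξ ∧ ξ ≤ Real.pi/2 ∧
        ∀ i j : Fin 2,
          (∑ k : Fin 2, ∑ l : Fin 2, U i k * U j l * Φ (k, l)) =
            if i = 0 ∧ j = 0 then (Real.cos (ξ/2) : ℂ)
            else if i = 1 ∧ j = 1 then (Real.sin (ξ/2) : ℂ)
            else 0 := by
  set M : Matrix (Fin 2) (Fin 2) ℂ := Matrix.of fun k l => Φ (k, l)
  have hM : M.IsSymm := IsSymm.ext fun i j => hsym j i
  obtain ⟨U, hU, s, t, ht, hts, hD⟩ := hM.exists_unitary_congr_eq_diagonal_antitone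
  have hnorm : s ^ 2 + t ^ 2 = 1 := by
    rw [sq_add_sq_eq_sum_normSq_of_unitary_congr_eq_diagonal hU hD, ← hunit,
      Fintype.sum_prod_type]
    rfl
  obtain ⟨ξ, hξ0, hξ, hcos, hsin⟩ := Real.exists_cos_half_eq_and_sin_half_eq ht hts hnorm
  refine ⟨U, hU, ξ, hξ0, hξ, fun i j => ?_⟩
  calc ∑ k, ∑ l, U i k * U j l * Φ (k, l) = (U * M * Uᵀ) i j :=
        (mul_mul_transpose_apply U M i j).symm
    _ = _ := by
      rw [hD, hcos, hsin]
      fin_cases i <;> fin_cases j <;> simp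
end
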